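/- arXiv:2103.10864 — 2 statements merged into one kernel-verified Lean document; each statement's English description precedes it below -/
import Mathlib

section
/- Let u : ℝ × ℝ^3 → ℝ^3 be a smooth real Schur flow in three dimensions (∂_3 u_1 = ∂_3 u_2 = 0) satisfying the barotropic Euler equation with smooth potential Π. Then the horizontal velocity 1-form satisfies the two-dimensional momentum equation: for a ∈ {1, 2}, ∂_t u_a + Σ_{b=1}^{2} ( u_b ∂_b u_a + u_b ∂_a u_b ) = −∂_a ( Π − (u_1² + u_2²)/2 ). -/
/-- Partial derivative in time of a function on `ℝ × ℝ^3`. -/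
noncomputable def pdt (f : ℝ × (Fin 3 → ℝ) → ℝ) (p : ℝ × (Fin 3 → ℝ)) : ℝ :=
  fderiv ℝ f p (1, 0)

/-- Partial derivative in the `j`-th spatial coordinate of a function on `ℝ × ℝ^3`. -/
noncomputable def pdx (j : Fin 3) (f : ℝ × (Fin 3 → ℝ) → ℝ) (p : ℝ × (Fin 3 → ℝ)) : ℝ :=
  fderiv ℝ f p (0, Pi.single j 1)

/-! For a horizontal component `u_a` the vertical advection term `u_3 ∂_3 u_a` vanishes, and
`Σ_b u_b ∂_a u_b = ∂_a (|u_h|² / 2)`, so adding this to both sides of the Euler equation for `u_a`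
turns it into the horizontal momentum equation. -/

section PartialDerivative

variable {f g : ℝ × (Fin 3 → ℝ) → ℝ} {p : ℝ × (Fin 3 → ℝ)}

theorem pdx_sub (hf : DifferentiableAt ℝ f p) (hg : DifferentiableAt ℝ g p) (j : Fin 3) :
    pdx j (fun q => f q - g q) p = pdx j f p - pdx j g p := by
  simp [pdx, fderiv_fun_sub hf hg]

theorem pdx_half_sq_add_sq (hf : DifferentiableAt ℝ f p) (hg : DifferentiableAt ℝ g p)
    (j : Fin 3) :
    pdx j (fun q => (f q ^ 2 + g q ^ 2) / 2) p = f p * pdx j f p + g p * pdx j g p := by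
  unfold pdx
  simp only [div_eq_mul_inv]
  rw [fderiv_mul_const (by fun_prop), fderiv_fun_add (by fun_prop) (by fun_prop),
    fderiv_fun_pow 2 hf, fderiv_fun_pow 2 hg]
  simp only [Nat.add_one_sub_one, pow_one, nsmul_eq_mul, Nat.cast_ofNat, smul_add,
    add_apply, smul_apply, smul_eq_mul]
  ring

end PartialDerivative

/-- for a 3D real Schur flow (`∂_3 u_1 = ∂_3 u_2 = 0`) solving the barotropic
Euler equation, the horizontal velocity 1-form satisfies the 2D momentum equation
`∂_t u_a + Σ_{b=1}^2 (u_b ∂_b u_a + u_b ∂_a u_b) = −∂_a (Π − |u_h|²/2)` for `a ∈ {1,2}`. -/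
theorem rsf3d_horizontal_momentum
    (u : Fin 3 → ℝ × (Fin 3 → ℝ) → ℝ) (P : ℝ × (Fin 3 → ℝ) → ℝ)
    (hu : ∀ k, ContDiff ℝ (⊤ : ℕ∞) (u k)) (hP : ContDiff ℝ (⊤ : ℕ∞) P)
    (hRSF : (∀ p, pdx 2 (u 0) p = 0) ∧ (∀ p, pdx 2 (u 1) p = 0))
    (heuler : ∀ k p, pdt (u k) p + ∑ j, u j p * pdx j (u k) p = -(pdx k P p)) :
    ∀ a : Fin 3, a = 0 ∨ a = 1 → ∀ p,
      pdt (u a) p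
        + ∑ b ∈ ({0, 1} : Finset (Fin 3)), (u b p * pdx b (u a) p + u b p * pdx a (u b) p)
        = -(pdx a (fun q => P q - (u 0 q ^ 2 + u 1 q ^ 2) / 2) p) := by
  intro a ha p
  have hdiff : ∀ k, DifferentiableAt ℝ (u k) p := fun k => (hu k).differentiable (by simp) p
  have hvert : pdx 2 (u a) p = 0 := by
    rcases ha with rfl | rfl
    exacts [hRSF.1 p, hRSF.2 p]
  have euler := heuler a p
  rw [Fin.sum_univ_three, hvert, mul_zero, add_zero] at euler
  rw [pdx_sub (hP.differentiable (by simp) p) (by fun_prop),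
    pdx_half_sq_add_sq (hdiff 0) (hdiff 1), Finset.sum_pair (by decide)]
  linarith
end

section
/- (Two Helmholtz laws in 3D.) Let u : ℝ × ℝ^3 → ℝ^3 be a smooth real Schur flow (∂_3 u_1 = ∂_3 u_2 = 0) satisfying the compressible barotropic Euler equation with smooth potential Π. Define the horizontal vorticity 2-form Ω_h with components (Ω_h)_{12} = −(Ω_h)_{21} = ∂_1 u_2 − ∂_2 u_1 and all other components zero, and the complementary 2-form Ω_z with components (Ω_z)_{j3} = −(Ω_z)_{3j} = ∂_j u_3 for j ∈ {1, 2} and (Ω_z)_{12} = (Ω_z)_{21} = 0. Then: (a) Ω_h is Lie-transported by u; (b) Ω_z is Lie-transported by u; and (c) Ω_h + Ω_z equals the full vorticity ω_{jk} = ∂_j u_k − ∂_k u_j of u. -/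
/-- An antisymmetric 2-form field `a` is Lie-transported by `u`. -/
def LieTransported (u : Fin 3 → ℝ × (Fin 3 → ℝ) → ℝ)
    (a : Fin 3 → Fin 3 → ℝ × (Fin 3 → ℝ) → ℝ) : Prop :=
  ∀ (j k : Fin 3) p, pdt (a j k) p
    + ∑ m : Fin 3, (u m p * pdx m (a j k) p + a m k p * pdx j (u m) p + a j m p * pdx k (u m) p)
    = 0

section SecondDerivative

variable {E F : Type*} [NormedAddCommGroup E] [NormedSpace ℝ E]
  [NormedAddCommGroup F] [NormedSpace ℝ F] {f : E → F} {x : E}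

theorem fderiv_fderiv_apply_comm (hf : ContDiffAt ℝ 2 f x) (v w : E) :
    fderiv ℝ (fun y => fderiv ℝ f y v) x w = fderiv ℝ (fun y => fderiv ℝ f y w) x v := by
  have hd : DifferentiableAt ℝ (fderiv ℝ f) x :=
    (hf.fderiv_right (m := 1) (by norm_num)).differentiableAt one_ne_zero
  rw [fderiv_clm_apply hd (differentiableAt_const v), fderiv_clm_apply hd (differentiableAt_const w)]
  simpa using (hf.isSymmSndFDerivAt (by simp)).eq w v

theorem fderiv_fderiv_apply_vectorField {V : E → E} (hf : ContDiffAt ℝ 2 f x)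
    (hV : DifferentiableAt ℝ V x) (w : E) :
    fderiv ℝ (fun y => fderiv ℝ f y (V y)) x w =
      fderiv ℝ (fun y => fderiv ℝ f y w) x (V x) + fderiv ℝ f x (fderiv ℝ V x w) := by
  have hd : DifferentiableAt ℝ (fderiv ℝ f) x :=
    (hf.fderiv_right (m := 1) (by norm_num)).differentiableAt one_ne_zero
  rw [fderiv_clm_apply hd hV, ← fderiv_fderiv_apply_comm hf]
  simp [fderiv_clm_apply hd (differentiableAt_const (V x)), add_comm]

end SecondDerivative

section SpaceTime

variable {u : Fin 3 → ℝ × (Fin 3 → ℝ) → ℝ} {f g P : ℝ × (Fin 3 → ℝ) → ℝ} {p : ℝ × (Fin 3 → ℝ)}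

theorem fderiv_apply_eq_pdt_add_pdx (f : ℝ × (Fin 3 → ℝ) → ℝ) (p : ℝ × (Fin 3 → ℝ)) (τ : ℝ)
    (U : Fin 3 → ℝ) : fderiv ℝ f p (τ, U) = τ * pdt f p + ∑ m, U m * pdx m f p := by
  have hdecomp : ((τ, U) : ℝ × (Fin 3 → ℝ)) = τ • (1, 0) + ∑ m, U m • (0, Pi.single m 1) := by
    ext <;> simp [Prod.fst_sum, Prod.snd_sum, Finset.sum_apply, Pi.single_apply]
  simp only [hdecomp, map_add, map_sum, map_smul, smul_eq_mul, pdt, pdx]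

theorem ContDiff.differentiable_pdx (hf : ContDiff ℝ 2 f) (j : Fin 3) :
    Differentiable ℝ (pdx j f) :=
  ((hf.fderiv_right (m := 1) (by norm_num)).clm_apply contDiff_const).differentiable one_ne_zero

theorem pdx_pdx_comm (hf : ContDiffAt ℝ 2 f p) (j k : Fin 3) :
    pdx j (pdx k f) p = pdx k (pdx j f) p :=
  fderiv_fderiv_apply_comm hf _ _

noncomputable def materialDeriv (u : Fin 3 → ℝ × (Fin 3 → ℝ) → ℝ) (f : ℝ × (Fin 3 → ℝ) → ℝ)
    (p : ℝ × (Fin 3 → ℝ)) : ℝ :=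
  pdt f p + ∑ m, u m p * pdx m f p

theorem materialDeriv_eq_fderiv : materialDeriv u f p = fderiv ℝ f p (1, fun m => u m p) := by
  rw [fderiv_apply_eq_pdt_add_pdx, one_mul, materialDeriv]

@[simp] theorem materialDeriv_zero : materialDeriv u 0 p = 0 := by
  simp [materialDeriv_eq_fderiv]

theorem materialDeriv_sub (hf : DifferentiableAt ℝ f p) (hg : DifferentiableAt ℝ g p) :
    materialDeriv u (f - g) p = materialDeriv u f p - materialDeriv u g p := by
  simp [materialDeriv_eq_fderiv, fderiv_sub hf hg]

theorem pdx_materialDeriv (hu : ∀ m, DifferentiableAt ℝ (u m) p) (hf : ContDiffAt ℝ 2 f p)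
    (l : Fin 3) :
    pdx l (materialDeriv u f) p = materialDeriv u (pdx l f) p + ∑ m, pdx l (u m) p * pdx m f p := by
  have hV : DifferentiableAt ℝ (fun q => ((1 : ℝ), fun m => u m q)) p :=
    (differentiableAt_const _).prodMk (differentiableAt_pi.2 hu)
  have hfield : materialDeriv u f = fun q => fderiv ℝ f q (1, fun m => u m q) :=
    funext fun _ => materialDeriv_eq_fderiv
  have hdV : fderiv ℝ (fun q => ((1 : ℝ), fun m => u m q)) p (0, Pi.single l 1) =
      (0, fun m => pdx l (u m) p) := by
    rw [(differentiableAt_const _).fderiv_prodMk (differentiableAt_pi.2 hu), fderiv_pi hu]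
    simp [pdx]
  rw [hfield, pdx, fderiv_fderiv_apply_vectorField hf hV, materialDeriv_eq_fderiv, hdV,
    fderiv_apply_eq_pdt_add_pdx f p 0, zero_mul, zero_add]
  rfl

theorem materialDeriv_pdx_of_euler (hu : ∀ m, ContDiff ℝ 2 (u m))
    (heuler : ∀ k p, materialDeriv u (u k) p = -pdx k P p) (l k : Fin 3) (p : ℝ × (Fin 3 → ℝ)) :
    materialDeriv u (pdx l (u k)) p + ∑ m, pdx l (u m) p * pdx m (u k) p = -pdx l (pdx k P) p := by
  rw [← pdx_materialDeriv (fun m => (hu m).differentiable two_ne_zero p) (hu k).contDiffAt,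
    show materialDeriv u (u k) = fun q => -pdx k P q from funext (heuler k), pdx, fderiv_fun_neg]
  rfl

theorem lieTransported_iff {a : Fin 3 → Fin 3 → ℝ × (Fin 3 → ℝ) → ℝ} :
    LieTransported u a ↔ ∀ j k p, materialDeriv u (a j k) p
      + ∑ m, (a m k p * pdx j (u m) p + a j m p * pdx k (u m) p) = 0 := by
  simp only [LieTransported, materialDeriv, add_assoc, Finset.sum_add_distrib]

theorem LieTransported.sub {a b : Fin 3 → Fin 3 → ℝ × (Fin 3 → ℝ) → ℝ}
    (ha : LieTransported u a) (hb : LieTransported u b)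
    (hda : ∀ j k, Differentiable ℝ (a j k)) (hdb : ∀ j k, Differentiable ℝ (b j k)) :
    LieTransported u (a - b) := by
  rw [lieTransported_iff] at *
  intro j k p
  have hajk := ha j k p
  have hbjk := hb j k p
  simp only [Pi.sub_apply, materialDeriv_sub (hda j k p) (hdb j k p), Fin.sum_univ_three] at *
  linear_combination hajk - hbjk

noncomputable def vorticity (u : Fin 3 → ℝ × (Fin 3 → ℝ) → ℝ) (j k : Fin 3) :
    ℝ × (Fin 3 → ℝ) → ℝ :=
  pdx j (u k) - pdx k (u j)

theorem differentiable_vorticity (hu : ∀ m, ContDiff ℝ 2 (u m)) (j k : Fin 3) :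
    Differentiable ℝ (vorticity u j k) :=
  ((hu k).differentiable_pdx j).sub ((hu j).differentiable_pdx k)

theorem lieTransported_vorticity (hu : ∀ m, ContDiff ℝ 2 (u m)) (hP : ContDiff ℝ 2 P)
    (heuler : ∀ k p, materialDeriv u (u k) p = -pdx k P p) :
    LieTransported u (vorticity u) := by
  rw [lieTransported_iff]
  intro j k p
  have hjk := materialDeriv_pdx_of_euler hu heuler j k p
  have hkj := materialDeriv_pdx_of_euler hu heuler k j p
  have hHessian := pdx_pdx_comm hP.contDiffAt j k (p := p)
  rw [vorticity, materialDeriv_sub ((hu k).differentiable_pdx j p) ((hu j).differentiable_pdx k p)]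
  simp only [vorticity, Pi.sub_apply, Fin.sum_univ_three] at *
  linear_combination hjk - hkj - hHessian

def horizontalPart (a : Fin 3 → Fin 3 → ℝ × (Fin 3 → ℝ) → ℝ) (j k : Fin 3) :
    ℝ × (Fin 3 → ℝ) → ℝ :=
  if j ≠ 2 ∧ k ≠ 2 then a j k else 0

theorem differentiable_horizontalPart {a : Fin 3 → Fin 3 → ℝ × (Fin 3 → ℝ) → ℝ}
    (ha : ∀ j k, Differentiable ℝ (a j k)) (j k : Fin 3) :
    Differentiable ℝ (horizontalPart a j k) := by
  unfold horizontalPart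
  split_ifs
  exacts [ha j k, differentiable_const 0]

/- Inside the horizontal block, the `m = 2` terms dropped from the Helmholtz equation of `ω` cancel
because `ω 2 k = -∂ₖu₂` there; outside it, every surviving term has a factor `∂₂u₀` or `∂₂u₁`. -/
theorem LieTransported.horizontalPart_vorticity (h₀ : ∀ p, pdx 2 (u 0) p = 0)
    (h₁ : ∀ p, pdx 2 (u 1) p = 0) (hω : LieTransported u (vorticity u)) :
    LieTransported u (horizontalPart (vorticity u)) := by
  rw [lieTransported_iff] at *
  intro j k p
  have hωjk := hω j k p
  fin_cases j <;> fin_cases k <;>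
    simp [horizontalPart, vorticity, Fin.sum_univ_three, h₀ p, h₁ p] at hωjk ⊢ <;>
    linear_combination hωjk

end SpaceTime

/-- Two Helmholtz laws in 3D: for a 3D real Schur flow solving the compressible
barotropic Euler equation, the horizontal vorticity `Ω_h` and the complementary 2-form `Ω_z`
are each Lie-transported by `u`, and their sum is the full vorticity. -/
theorem rsf3d_two_helmholtz_laws
    (u : Fin 3 → ℝ × (Fin 3 → ℝ) → ℝ) (P : ℝ × (Fin 3 → ℝ) → ℝ)
    (hu : ∀ k, ContDiff ℝ (⊤ : ℕ∞) (u k)) (hP : ContDiff ℝ (⊤ : ℕ∞) P)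
    (hRSF : (∀ p, pdx 2 (u 0) p = 0) ∧ (∀ p, pdx 2 (u 1) p = 0))
    (heuler : ∀ k p, pdt (u k) p + ∑ j, u j p * pdx j (u k) p = -(pdx k P p))
    (Ωh : Fin 3 → Fin 3 → ℝ × (Fin 3 → ℝ) → ℝ)
    (hΩh : ∀ j k : Fin 3, ∀ p, Ωh j k p =
      if j = 0 ∧ k = 1 then pdx 0 (u 1) p - pdx 1 (u 0) p
      else if j = 1 ∧ k = 0 then -(pdx 0 (u 1) p - pdx 1 (u 0) p)
      else 0)
    (Ωz : Fin 3 → Fin 3 → ℝ × (Fin 3 → ℝ) → ℝ)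
    (hΩz : ∀ j k : Fin 3, ∀ p, Ωz j k p =
      if k = 2 ∧ j ≠ 2 then pdx j (u 2) p
      else if j = 2 ∧ k ≠ 2 then -(pdx k (u 2) p)
      else 0) :
    LieTransported u Ωh ∧ LieTransported u Ωz ∧
      (∀ (j k : Fin 3) p, Ωh j k p + Ωz j k p = pdx j (u k) p - pdx k (u j) p) := by
  obtain ⟨h₀, h₁⟩ := hRSF
  have hu₂ : ∀ k, ContDiff ℝ 2 (u k) := fun k => (hu k).of_le (by norm_cast)
  have hω := lieTransported_vorticity hu₂ (hP.of_le (by norm_cast)) heuler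
  have hΩh' : Ωh = horizontalPart (vorticity u) := by
    funext j k p
    fin_cases j <;> fin_cases k <;> simp [hΩh, horizontalPart, vorticity]
  have hΩz' : Ωz = vorticity u - horizontalPart (vorticity u) := by
    funext j k p
    fin_cases j <;> fin_cases k <;> simp [hΩz, horizontalPart, vorticity, h₀ p, h₁ p]
  subst hΩh' hΩz'
  refine ⟨hω.horizontalPart_vorticity h₀ h₁, hω.sub (hω.horizontalPart_vorticity h₀ h₁)
    (differentiable_vorticity hu₂) (differentiable_horizontalPart (differentiable_vorticity hu₂)),
    fun j k p => by simp [vorticity]⟩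
end
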